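/- There exists an absolute constant C₀ > 0 such that for every R > 0 and every u : ℝ³ → ℝ continuously differentiable on a neighborhood of the closed ball B̄_R(0) one has ∫_{B_R} |u(x)|²/|x|² dx ≤ C₀ ( ∫_{B_R} |u_r|² dx + ( ∫_{B_R} |u|⁶ dx )^{1/3} ), where u_r(x) = (x/|x|)·∇u(x) is the radial derivative of u. -/

import Mathlib

open MeasureTheory Filter Set

noncomputable section

/-- Euclidean 3-space. -/
abbrev E3 := EuclideanSpace ℝ (Fin 3)

/-- Radial derivative `u_r(x) = (x/|x|)·∇u(x)` of `u : ℝ³ → ℝ`. -/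
noncomputable def radialDeriv (u : E3 → ℝ) (x : E3) : ℝ :=
  inner ℝ ((‖x‖)⁻¹ • x) (gradient u x)

/-!
Along a ray `f(r) = u(rω)`, integrating `(w f²)'` with the weight `w(r) = r(1 - r/R)`, which
vanishes at both ends of `[0, R]`, and absorbing the cross term `2 w f f'` gives
`∫₀ᴿ f² ≤ 4 ∫₀ᴿ r² f'² + 4 ∫₀ᴿ (r/R) f²`. Young's inequality
`(r/R) f² ≤ r² f⁶ / (3l²) + 2l / (3R)` bounds the last term for every `l > 0`. Integrating over
the unit sphere in polar coordinates, where the Jacobian `r²` turns `∫₀ᴿ f²` into `∫ u²/|x|²`,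
and then taking `l = (∫ |u|⁶)^{1/3}` (or `l → 0` if this vanishes) gives the inequality with
`C₀ = 4 (1 + |S²|)`.
-/

open Metric InnerProductSpace
open scoped Gradient RealInnerProductSpace Topology

lemma three_mul_mul_sq_le_pow_three_add {a b : ℝ} (ha : 0 ≤ a) (hb : 0 ≤ b) :
    3 * a * b ^ 2 ≤ a ^ 3 + 2 * b ^ 3 := by
  nlinarith [mul_nonneg (add_nonneg (add_nonneg ha ha) hb) (sq_nonneg (a - b))]

lemma div_mul_le_young {r R y l : ℝ} (hr : 0 ≤ r) (hrR : r ≤ R) (hy : 0 ≤ y) (hl : 0 < l) :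
    r / R * y ≤ r ^ 2 * y ^ 3 / (3 * l ^ 2) + 2 * l / (3 * R) := by
  rcases hr.eq_or_lt with rfl | hr0
  · rw [zero_div, zero_mul]
    positivity
  have hR : 0 < R := hr0.trans_le hrR
  have hamgm := three_mul_mul_sq_le_pow_three_add (mul_nonneg hr hy) hl.le
  rw [div_mul_eq_mul_div, div_add_div _ _ (by positivity) (by positivity),
    div_le_div_iff₀ (by positivity) (by positivity)]
  nlinarith [mul_nonneg (mul_nonneg (pow_nonneg hr 2) (pow_nonneg hy 3)) (sub_nonneg.2 hrR)]

lemma le_mul_rpow_one_third_of_forall {X D c : ℝ} (hD : 0 ≤ D)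
    (h : ∀ l > 0, X ≤ D / (3 * l ^ 2) + c * (2 * l / 3)) :
    X ≤ (1 + 2 * c) / 3 * D ^ ((1 : ℝ) / 3) := by
  rcases hD.eq_or_lt with rfl | hD
  · rw [Real.zero_rpow (by norm_num), mul_zero]
    have hlim : Tendsto (fun l : ℝ => c * (2 * l / 3)) (𝓝[>] 0) (𝓝 0) := by
      simpa using ((by fun_prop : Continuous fun l : ℝ => c * (2 * l / 3)).tendsto 0).mono_left
        nhdsWithin_le_nhds
    exact ge_of_tendsto hlim (eventually_nhdsWithin_of_forall fun l hl => by simpa using h l hl)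
  set d := D ^ ((1 : ℝ) / 3) with hd
  have hd0 : 0 < d := by positivity
  have hd3 : d ^ 3 = D := by
    rw [hd, ← Real.rpow_natCast, ← Real.rpow_mul hD.le]; norm_num
  have := h d hd0
  rw [← hd3, show d ^ 3 / (3 * d ^ 2) = d / 3 by field_simp] at this
  linarith

section OneDim

variable {R : ℝ} {f f' : ℝ → ℝ}

lemma intervalIntegral_sq_le_of_hasDerivAt (hR : 0 < R)
    (hd : ∀ r ∈ Icc 0 R, HasDerivAt f (f' r) r) (hc : ContinuousOn f' (Icc 0 R)) :
    ∫ r in 0..R, f r ^ 2 ≤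
      4 * (∫ r in 0..R, r ^ 2 * f' r ^ 2) + 4 * ∫ r in 0..R, r / R * f r ^ 2 := by
  have hf : ContinuousOn f (Icc 0 R) := fun r hr => (hd r hr).continuousAt.continuousWithinAt
  have hint : ∀ g : ℝ → ℝ, ContinuousOn g (Icc 0 R) → IntervalIntegrable g volume 0 R :=
    fun g hg => hg.intervalIntegrable_of_Icc hR.le
  set w : ℝ → ℝ := fun r => r - r ^ 2 / R
  set g : ℝ → ℝ := fun r => (1 - 2 * r / R) * f r ^ 2 + w r * (2 * f r * f' r)
  have hg : ContinuousOn g (Icc 0 R) := by fun_prop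
  have hg_int : ∫ r in 0..R, g r = 0 := by
    rw [intervalIntegral.integral_eq_sub_of_hasDerivAt (f := fun r => w r * f r ^ 2)
      (fun r hr => ?_) (hint g hg)]
    · have : R - R ^ 2 / R = 0 := by field_simp; ring
      simp [w, this]
    · rw [uIcc_of_le hR.le] at hr
      have hw : HasDerivAt w (1 - 2 * r / R) r :=
        ((hasDerivAt_id' r).fun_sub ((hasDerivAt_pow 2 r).div_const R)).congr_deriv
          (by norm_num)
      have hf2 : HasDerivAt (fun r => f r ^ 2) (2 * f r * f' r) r := by
        simpa using (hd r hr).fun_pow 2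
      exact hw.fun_mul hf2
  have hpt : ∀ r ∈ Icc 0 R, f r ^ 2 ≤
      g r + 2 * (r / R * f r ^ 2) + 1 / 2 * f r ^ 2 + 2 * (r ^ 2 * f' r ^ 2) := by
    intro r ⟨hr0, hrR⟩
    have hw0 : 0 ≤ w r := by
      rw [sub_nonneg, div_le_iff₀ hR]
      nlinarith
    have hwr : w r ≤ r := sub_le_self _ (by positivity)
    have : g r + 2 * (r / R * f r ^ 2) = f r ^ 2 + w r * (2 * f r * f' r) := by
      simp only [g]; field_simp; ring
    nlinarith [sq_nonneg (f r + 2 * w r * f' r), mul_le_mul hwr hwr hw0 hr0, sq_nonneg (f' r)]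
  have hmono : ∫ r in 0..R, f r ^ 2 ≤ ∫ r in 0..R,
      (g r + 2 * (r / R * f r ^ 2) + 1 / 2 * f r ^ 2 + 2 * (r ^ 2 * f' r ^ 2)) :=
    intervalIntegral.integral_mono_on hR.le (hint _ (by fun_prop)) (hint _ (by fun_prop)) hpt
  rw [intervalIntegral.integral_add, intervalIntegral.integral_add, intervalIntegral.integral_add,
    intervalIntegral.integral_const_mul, intervalIntegral.integral_const_mul,
    intervalIntegral.integral_const_mul, hg_int] at hmono
  · linarith
  all_goals exact hint _ (by fun_prop)

lemma intervalIntegral_div_mul_sq_le (hR : 0 < R) (hf : ContinuousOn f (Icc 0 R)) {l : ℝ}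
    (hl : 0 < l) :
    ∫ r in 0..R, r / R * f r ^ 2 ≤ (∫ r in 0..R, r ^ 2 * f r ^ 6) / (3 * l ^ 2) + 2 * l / 3 := by
  have hint : ∀ g : ℝ → ℝ, ContinuousOn g (Icc 0 R) → IntervalIntegrable g volume 0 R :=
    fun g hg => hg.intervalIntegrable_of_Icc hR.le
  calc ∫ r in 0..R, r / R * f r ^ 2
      ≤ ∫ r in 0..R, (r ^ 2 * f r ^ 6 / (3 * l ^ 2) + 2 * l / (3 * R)) := by
        refine intervalIntegral.integral_mono_on hR.le (hint _ (by fun_prop))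
          (hint _ (by fun_prop)) fun r hr => ?_
        simpa only [← pow_mul] using div_mul_le_young hr.1 hr.2 (sq_nonneg (f r)) hl
    _ = _ := by
        rw [intervalIntegral.integral_add (hint _ (by fun_prop)) (hint _ (by fun_prop)),
          intervalIntegral.integral_div, intervalIntegral.integral_const, smul_eq_mul, sub_zero]
        field_simp

end OneDim

namespace MeasureTheory

variable {E F : Type*} [NormedAddCommGroup E] [NormedSpace ℝ E] [Nontrivial E]
  [FiniteDimensional ℝ E] [MeasurableSpace E] [BorelSpace E]
  [NormedAddCommGroup F] [NormedSpace ℝ F] (μ : Measure E) [μ.IsAddHaarMeasure]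

lemma integral_volumeIoiPow (n : ℕ) (f : ℝ → F) :
    ∫ r, f r ∂(Measure.volumeIoiPow n) = ∫ r in Ioi (0 : ℝ), r ^ n • f r := by
  simp only [Measure.volumeIoiPow, ENNReal.ofReal]
  rw [integral_withDensity_eq_integral_smul (measurable_subtype_coe.pow_const _).real_toNNReal,
    integral_subtype_comap measurableSet_Ioi fun r : ℝ => Real.toNNReal (r ^ n) • f r]
  refine setIntegral_congr_fun measurableSet_Ioi fun r hr => ?_
  rw [NNReal.smul_def, Real.coe_toNNReal _ (pow_nonneg hr.out.le _)]

theorem integrable_sphere_and_integral_eq_Ioi {g : E → F} (hg : Integrable g μ) :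
    Integrable (fun ω : sphere (0 : E) 1 =>
      ∫ r in Ioi (0 : ℝ), r ^ (Module.finrank ℝ E - 1) • g (r • (ω : E))) μ.toSphere ∧
    ∫ x, g x ∂μ = ∫ ω : sphere (0 : E) 1,
      (∫ r in Ioi (0 : ℝ), r ^ (Module.finrank ℝ E - 1) • g (r • (ω : E))) ∂μ.toSphere := by
  set h : sphere (0 : E) 1 × Ioi (0 : ℝ) → F := fun p => g (p.2.1 • (p.1 : E))
  have hcomp : (fun x : ({0}ᶜ : Set E) => g x) = h ∘ homeomorphUnitSphereProd E := by
    funext x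
    simp [h, smul_inv_smul₀ (norm_ne_zero_iff.2 x.2)]
  have hemb := (homeomorphUnitSphereProd E).measurableEmbedding
  have hmp := μ.measurePreserving_homeomorphUnitSphereProd
  have hcompl : MeasurableSet ({0}ᶜ : Set E) := (measurableSet_singleton 0).compl
  have hh : Integrable h (μ.toSphere.prod (Measure.volumeIoiPow (Module.finrank ℝ E - 1))) := by
    rw [← hmp.integrable_comp_emb hemb, ← hcomp]
    exact (integrableOn_iff_comap_subtypeVal hcompl).1 hg.integrableOn
  have hinner : ∀ ω : sphere (0 : E) 1, ∫ r, h (ω, r) ∂(Measure.volumeIoiPow _) =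
      ∫ r in Ioi (0 : ℝ), r ^ (Module.finrank ℝ E - 1) • g (r • (ω : E)) :=
    fun ω => integral_volumeIoiPow _ fun r => g (r • (ω : E))
  refine ⟨hh.integral_prod_left.congr (.of_forall hinner), ?_⟩
  calc ∫ x, g x ∂μ = ∫ x : ({0}ᶜ : Set E), g x ∂(μ.comap Subtype.val) := by
        rw [integral_subtype_comap hcompl, restrict_compl_singleton]
    _ = ∫ p, h p ∂(μ.toSphere.prod (Measure.volumeIoiPow (Module.finrank ℝ E - 1))) := by
        rw [hcomp]; exact hmp.integral_comp hemb h
    _ = _ := by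
        rw [integral_prod h hh]
        exact integral_congr_ae (.of_forall hinner)

theorem integrable_sphere_and_setIntegral_ball_eq_Ioo {g : E → F} {R : ℝ}
    (hg : IntegrableOn g (ball 0 R) μ) :
    Integrable (fun ω : sphere (0 : E) 1 =>
      ∫ r in Ioo 0 R, r ^ (Module.finrank ℝ E - 1) • g (r • (ω : E))) μ.toSphere ∧
    ∫ x in ball 0 R, g x ∂μ = ∫ ω : sphere (0 : E) 1,
      (∫ r in Ioo 0 R, r ^ (Module.finrank ℝ E - 1) • g (r • (ω : E))) ∂μ.toSphere := by
  have hray : ∀ ω : sphere (0 : E) 1, ∫ r in Ioi (0 : ℝ),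
      r ^ (Module.finrank ℝ E - 1) • (ball 0 R).indicator g (r • (ω : E)) =
      ∫ r in Ioo 0 R, r ^ (Module.finrank ℝ E - 1) • g (r • (ω : E)) := by
    intro ω
    rw [← Ioi_inter_Iio, ← setIntegral_indicator measurableSet_Iio]
    refine setIntegral_congr_fun measurableSet_Ioi fun r (hr : 0 < r) => ?_
    have : r • (ω : E) ∈ ball 0 R ↔ r ∈ Iio R := by
      simp [norm_smul, abs_of_pos hr]
    by_cases hrR : r ∈ Iio R
    · simp [indicator_of_mem hrR, indicator_of_mem (this.2 hrR)]
    · simp [indicator_of_notMem hrR, indicator_of_notMem (mt this.1 hrR)]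
  obtain ⟨hint, heq⟩ :=
    integrable_sphere_and_integral_eq_Ioi μ (hg.integrable_indicator measurableSet_ball)
  refine ⟨hint.congr (.of_forall hray), ?_⟩
  rw [← integral_indicator measurableSet_ball, heq]
  exact integral_congr_ae (.of_forall hray)

end MeasureTheory

section Gradient

variable {E : Type*} [NormedAddCommGroup E] [InnerProductSpace ℝ E] [CompleteSpace E]
  {u : E → ℝ}

lemma HasDerivAt.comp_smul_const_of_differentiableAt {ω : E} {r : ℝ}
    (hu : DifferentiableAt ℝ u (r • ω)) :
    HasDerivAt (fun t : ℝ => u (t • ω)) ⟪ω, ∇ u (r • ω)⟫ r := by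
  have := hu.hasFDerivAt.comp_hasDerivAt r ((hasDerivAt_id r).smul_const ω)
  rwa [one_smul, ← inner_gradient_left, real_inner_comm] at this

lemma ContDiffOn.continuousOn_gradient {V : Set E} (hu : ContDiffOn ℝ 1 u V) (hV : IsOpen V) :
    ContinuousOn (∇ u) V :=
  (toDual ℝ E).symm.continuous.comp_continuousOn (hu.continuousOn_fderiv_of_isOpen hV le_rfl)

end Gradient

lemma radialDeriv_smul (u : E3 → ℝ) {ω : E3} (hω : ‖ω‖ = 1) {r : ℝ} (hr : 0 < r) :
    radialDeriv u (r • ω) = ⟪ω, ∇ u (r • ω)⟫ := by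
  rw [radialDeriv, norm_smul, hω, mul_one, Real.norm_of_nonneg hr.le, smul_smul,
    inv_mul_cancel₀ hr.ne', one_smul]

lemma abs_radialDeriv_le (u : E3 → ℝ) (x : E3) : |radialDeriv u x| ≤ ‖∇ u x‖ := by
  refine (abs_real_inner_le_norm _ _).trans (mul_le_of_le_one_left (norm_nonneg _) ?_)
  rcases eq_or_ne x 0 with rfl | hx
  · simp
  · rw [norm_smul, norm_inv, norm_norm, inv_mul_cancel₀ (norm_ne_zero_iff.2 hx)]

lemma integrableOn_ball_radialDeriv_sq {u : E3 → ℝ} {V : Set E3} {R : ℝ} (hV : IsOpen V)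
    (hVR : closedBall 0 R ⊆ V) (hu : ContDiffOn ℝ 1 u V) :
    IntegrableOn (fun x => radialDeriv u x ^ 2) (ball 0 R) := by
  have hgrad := (hu.continuousOn_gradient hV).mono hVR
  have hmeas : AEStronglyMeasurable (radialDeriv u) (volume.restrict (ball 0 R)) :=
    ((measurable_norm.inv.smul measurable_id).aestronglyMeasurable).inner
      ((hgrad.mono ball_subset_closedBall).aestronglyMeasurable measurableSet_ball)
  refine Integrable.mono' ((hgrad.norm.pow 2).integrableOn_compact (isCompact_closedBall 0 R)
    |>.mono_set ball_subset_closedBall) (hmeas.pow 2) (.of_forall fun x => ?_)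
  rw [norm_pow, Real.norm_eq_abs]
  exact pow_le_pow_left₀ (abs_nonneg _) (abs_radialDeriv_le u x) 2

lemma setIntegral_Ioo_ray_le {u : E3 → ℝ} {V : Set E3} {R l : ℝ} (hR : 0 < R) (hV : IsOpen V)
    (hVR : closedBall 0 R ⊆ V) (hu : ContDiffOn ℝ 1 u V) {ω : E3} (hω : ‖ω‖ = 1) (hl : 0 < l) :
    ∫ r in Ioo 0 R, r ^ 2 * (u (r • ω) ^ 2 / ‖r • ω‖ ^ 2) ≤
      4 * (∫ r in Ioo 0 R, r ^ 2 * radialDeriv u (r • ω) ^ 2) +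
        4 * ((∫ r in Ioo 0 R, r ^ 2 * |u (r • ω)| ^ 6) / (3 * l ^ 2) + 2 * l / 3) := by
  have hray : ∀ r ∈ Icc 0 R, r • ω ∈ V := fun r hr =>
    hVR (by simpa [norm_smul, hω, abs_of_nonneg hr.1] using hr.2)
  have hd : ∀ r ∈ Icc 0 R, HasDerivAt (fun t : ℝ => u (t • ω)) ⟪ω, ∇ u (r • ω)⟫ r :=
    fun r hr => .comp_smul_const_of_differentiableAt
      ((hu.contDiffAt (hV.mem_nhds (hray r hr))).differentiableAt one_ne_zero)
  have hc : ContinuousOn (fun r : ℝ => ⟪ω, ∇ u (r • ω)⟫) (Icc 0 R) :=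
    continuousOn_const.inner ((hu.continuousOn_gradient hV).comp (by fun_prop) hray)
  have hsq := intervalIntegral_sq_le_of_hasDerivAt hR hd hc
  have hweighted := intervalIntegral_div_mul_sq_le hR
    (fun r hr => (hd r hr).continuousAt.continuousWithinAt) hl
  simp only [intervalIntegral.integral_of_le hR.le, integral_Ioc_eq_integral_Ioo] at hsq hweighted
  have hA : ∫ r in Ioo 0 R, r ^ 2 * (u (r • ω) ^ 2 / ‖r • ω‖ ^ 2) =
      ∫ r in Ioo 0 R, u (r • ω) ^ 2 :=
    setIntegral_congr_fun measurableSet_Ioo fun r hr => by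
      rw [norm_smul, hω, mul_one, Real.norm_of_nonneg hr.1.le]
      field_simp [hr.1.ne']
  have hD : ∫ r in Ioo 0 R, r ^ 2 * radialDeriv u (r • ω) ^ 2 =
      ∫ r in Ioo 0 R, r ^ 2 * ⟪ω, ∇ u (r • ω)⟫ ^ 2 :=
    setIntegral_congr_fun measurableSet_Ioo fun r hr => by rw [radialDeriv_smul u hω hr.1]
  have hK : ∫ r in Ioo 0 R, r ^ 2 * |u (r • ω)| ^ 6 = ∫ r in Ioo 0 R, r ^ 2 * u (r • ω) ^ 6 := by
    simp only [(by decide : Even 6).pow_abs]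
  rw [hA, hD, hK]
  linarith

lemma setIntegral_ball_sq_div_sq_le {u : E3 → ℝ} {V : Set E3} {R l : ℝ} (hR : 0 < R)
    (hV : IsOpen V) (hVR : closedBall 0 R ⊆ V) (hu : ContDiffOn ℝ 1 u V)
    (hint : IntegrableOn (fun x => u x ^ 2 / ‖x‖ ^ 2) (ball 0 R)) (hl : 0 < l) :
    ∫ x in ball 0 R, u x ^ 2 / ‖x‖ ^ 2 ≤
      4 * (∫ x in ball 0 R, radialDeriv u x ^ 2) +
        4 * ((∫ x in ball 0 R, |u x| ^ 6) / (3 * l ^ 2) +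
          (volume : Measure E3).toSphere.real univ * (2 * l / 3)) := by
  have polar := fun (g : E3 → ℝ) (hg : IntegrableOn g (ball 0 R)) => by
    simpa only [finrank_euclideanSpace_fin, Nat.add_one_sub_one, smul_eq_mul] using
      integrable_sphere_and_setIntegral_ball_eq_Ioo volume hg
  have hK_ball : IntegrableOn (fun x => |u x| ^ 6) (ball 0 R) :=
    ((hu.continuousOn.mono hVR).abs.pow 6).integrableOn_compact (isCompact_closedBall 0 R)
      |>.mono_set ball_subset_closedBall
  obtain ⟨-, hA⟩ := polar _ hint
  obtain ⟨hD_int, hD⟩ := polar _ (integrableOn_ball_radialDeriv_sq hV hVR hu)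
  obtain ⟨hK_int, hK⟩ := polar _ hK_ball
  have hKl_int : Integrable (fun ω : sphere (0 : E3) 1 =>
      (∫ r in Ioo 0 R, r ^ 2 * |u (r • (ω : E3))| ^ 6) / (3 * l ^ 2) + 2 * l / 3)
      (volume : Measure E3).toSphere :=
    (hK_int.div_const _).add (integrable_const _)
  rw [hA, hD, hK]
  calc _ ≤ ∫ ω : sphere (0 : E3) 1,
        (4 * (∫ r in Ioo 0 R, r ^ 2 * radialDeriv u (r • (ω : E3)) ^ 2) +
          4 * ((∫ r in Ioo 0 R, r ^ 2 * |u (r • (ω : E3))| ^ 6) / (3 * l ^ 2) + 2 * l / 3))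
          ∂(volume : Measure E3).toSphere :=
        integral_mono_of_nonneg
          (.of_forall fun ω => setIntegral_nonneg measurableSet_Ioo fun r _ => by positivity)
          ((hD_int.const_mul 4).add (hKl_int.const_mul 4))
          (.of_forall fun ω => setIntegral_Ioo_ray_le hR hV hVR hu (norm_eq_of_mem_sphere ω) hl)
    _ = _ := by
        rw [integral_add (hD_int.const_mul 4) (hKl_int.const_mul 4), integral_const_mul,
          integral_const_mul, integral_add (hK_int.div_const _) (integrable_const _), integral_div,
          integral_const, smul_eq_mul]

/-- Hardy inequality on a ball, Lemma 3.1(ii). -/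
theorem statement4 :
    ∃ C₀ : ℝ, 0 < C₀ ∧
      ∀ (R : ℝ), 0 < R →
        ∀ (u : E3 → ℝ) (V : Set E3), IsOpen V → Metric.closedBall (0 : E3) R ⊆ V →
          ContDiffOn ℝ 1 u V →
          (∫ x in Metric.ball (0 : E3) R, (u x) ^ 2 / ‖x‖ ^ 2) ≤
            C₀ * ((∫ x in Metric.ball (0 : E3) R, (radialDeriv u x) ^ 2) +
              (∫ x in Metric.ball (0 : E3) R, |u x| ^ 6) ^ ((1 : ℝ) / 3)) := by
  set m := (volume : Measure E3).toSphere.real univ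
  have hm : 0 ≤ m := measureReal_nonneg
  refine ⟨4 * (1 + m), by positivity, fun R hR u V hV hVR hu => ?_⟩
  have hD : 0 ≤ ∫ x in ball 0 R, radialDeriv u x ^ 2 := integral_nonneg fun _ => sq_nonneg _
  have hK : 0 ≤ ∫ x in ball 0 R, |u x| ^ 6 := integral_nonneg fun _ => by positivity
  have hK3 : 0 ≤ (∫ x in ball 0 R, |u x| ^ 6) ^ ((1 : ℝ) / 3) := by positivity
  by_cases hint : IntegrableOn (fun x => u x ^ 2 / ‖x‖ ^ 2) (ball 0 R)
  · have := le_mul_rpow_one_third_of_forall hK (c := m)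
      (X := ((∫ x in ball 0 R, u x ^ 2 / ‖x‖ ^ 2) - 4 * ∫ x in ball 0 R, radialDeriv u x ^ 2) / 4)
      fun l hl => by linarith [setIntegral_ball_sq_div_sq_le hR hV hVR hu hint hl]
    nlinarith [mul_nonneg hm hD, mul_nonneg hm hK3]
  · rw [integral_undef hint]
    positivity
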